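/- arXiv:dg-ga/9603008 — 3 statements merged into one kernel-verified Lean document; each statement's English description precedes it below -/
import Mathlib

section
/- Let 0 < λ₁ ≤ λ₂ ≤ λ₃ ≤ λ₄ < 1/√2 with λ₁² + λ₂² + λ₃² + λ₄² < 1 + 2λ₁², and let α₁ be a real number with 0 < α₁ ≤ λ₁. Define α_q for q = 2,3,4 by α_q² = (1/2)·[1 - ((1 - 2λ_q²)/(1 - 2λ₁²))·(1 - 2α₁²)]. Then 0 < α_q² ≤ λ_q² for q = 2,3,4, and the numbers x := (1 - 2λ₁²)/(1 - 2α₁²) and y := (1 - x)/2 satisfy x > 0, y ≥ 0, x + 2y = 1, and α_q² x + y = λ_q² for all q = 1,2,3,4. -/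
/-!
The value of `α_q²` is forced: given `x = (1 - 2λ₁²)/(1 - 2α₁²)` and `y = (1 - x)/2`, it is the
unique solution of `α_q² x + y = λ_q²`, i.e. `α_q² = ½(1 - (1 - 2λ_q²)/x)`. So the linear system
holds by construction (and for `q = 1` the formula returns `α₁²`), and the content is the bound
`0 < α_q² ≤ λ_q²`. Writing `r = (1 - 2λ_q²)/(1 - 2λ₁²) ∈ [0, 1]`, positivity is `r(1 - 2α₁²) < 1`,
and `α_q² ≤ λ_q²` reduces to `(1 - 2λ_q²)(1 - 2α₁² - (1 - 2λ₁²)) ≥ 0`, which is `α₁ ≤ λ₁`.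
-/

/-- The paper's `α_q²` for `l = λ_q`, with `l1 = λ₁` and `a1 = α₁`. -/
noncomputable def shrinkSq (l1 a1 l : ℝ) : ℝ :=
  (1/2) * (1 - (1 - 2*l^2)/(1 - 2*l1^2) * (1 - 2*a1^2))

lemma two_mul_sq_lt_one_of_lt_inv_sqrt_two {l : ℝ} (hl0 : 0 ≤ l) (hl : l < 1 / Real.sqrt 2) :
    2 * l^2 < 1 := by
  rw [one_div, ← Real.sqrt_inv, Real.lt_sqrt hl0] at hl
  linarith

section shrinkSq

variable {l1 a1 l : ℝ}

lemma shrinkSq_self (hd : 1 - 2*l1^2 ≠ 0) : shrinkSq l1 a1 l1 = a1^2 := by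
  rw [shrinkSq, div_self hd]
  ring

lemma shrinkSq_mul_add (hd : 1 - 2*l1^2 ≠ 0) (hc : 1 - 2*a1^2 ≠ 0) :
    shrinkSq l1 a1 l * ((1 - 2*l1^2)/(1 - 2*a1^2)) + (1 - (1 - 2*l1^2)/(1 - 2*a1^2))/2 = l^2 := by
  unfold shrinkSq
  field_simp
  ring

variable (ha0 : 0 < a1) (ha1 : a1 ≤ l1) (hl1 : l1 ≤ l) (hl : 2 * l^2 < 1)
include ha0 ha1 hl1 hl

lemma shrinkSq_pos : 0 < shrinkSq l1 a1 l := by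
  have hsq : l1^2 ≤ l^2 := pow_le_pow_left₀ (ha0.le.trans ha1) hl1 2
  have hd : 0 < 1 - 2*l1^2 := by linarith
  have hc : 0 < 1 - 2*a1^2 := by nlinarith
  have hr : (1 - 2*l^2)/(1 - 2*l1^2) ≤ 1 := by rw [div_le_one hd]; linarith
  have : (1 - 2*l^2)/(1 - 2*l1^2) * (1 - 2*a1^2) < 1 := by
    calc _ ≤ 1 * (1 - 2*a1^2) := mul_le_mul_of_nonneg_right hr hc.le
      _ < 1 := by nlinarith
  unfold shrinkSq
  linarith

lemma shrinkSq_le_sq : shrinkSq l1 a1 l ≤ l^2 := by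
  have hsq : a1^2 ≤ l1^2 := pow_le_pow_left₀ ha0.le ha1 2
  have hd : 0 < 1 - 2*l1^2 := by nlinarith [pow_le_pow_left₀ (ha0.le.trans ha1) hl1 2]
  have hr : 1 - 2*l^2 ≤ (1 - 2*l^2)/(1 - 2*l1^2) * (1 - 2*a1^2) := by
    rw [div_mul_eq_mul_div, le_div_iff₀ hd]
    exact mul_le_mul_of_nonneg_left (by linarith) (by linarith)
  unfold shrinkSq
  linarith

end shrinkSq

theorem stmt_3_general (l1 l2 l3 l4 a1 : ℝ)
    (h12 : l1 ≤ l2) (h23 : l2 ≤ l3) (h34 : l3 ≤ l4)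
    (h4 : l4 < 1 / Real.sqrt 2)
    (ha0 : 0 < a1) (ha1 : a1 ≤ l1) :
    let A : Fin 4 → ℝ := ![a1^2,
      (1/2) * (1 - (1 - 2*l2^2)/(1 - 2*l1^2) * (1 - 2*a1^2)),
      (1/2) * (1 - (1 - 2*l3^2)/(1 - 2*l1^2) * (1 - 2*a1^2)),
      (1/2) * (1 - (1 - 2*l4^2)/(1 - 2*l1^2) * (1 - 2*a1^2))]
    let L : Fin 4 → ℝ := ![l1^2, l2^2, l3^2, l4^2]
    let x := (1 - 2*l1^2)/(1 - 2*a1^2)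
    let y := (1 - x)/2
    (∀ q, 0 < A q ∧ A q ≤ L q) ∧ 0 < x ∧ 0 ≤ y ∧ x + 2*y = 1 ∧
    ∀ q, A q * x + y = L q := by
  intro A L x y
  let lam : Fin 4 → ℝ := ![l1, l2, l3, l4]
  have hlam : ∀ q, l1 ≤ lam q ∧ 2 * lam q ^ 2 < 1 := by
    intro q
    have hle : l1 ≤ lam q ∧ lam q ≤ l4 := by
      refine ⟨?_, ?_⟩ <;> fin_cases q <;> simp [lam] <;> linarith
    exact ⟨hle.1, two_mul_sq_lt_one_of_lt_inv_sqrt_two (by linarith) (hle.2.trans_lt h4)⟩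
  have hsq : a1^2 ≤ l1^2 := pow_le_pow_left₀ ha0.le ha1 2
  have hl1 : 2 * l1^2 < 1 := (hlam 0).2
  have hd : 0 < 1 - 2*l1^2 := by linarith
  have hc : 0 < 1 - 2*a1^2 := by linarith
  have hA : ∀ q, A q = shrinkSq l1 a1 (lam q) := by
    intro q
    fin_cases q
    · exact (shrinkSq_self hd.ne').symm
    all_goals rfl
  have hL : ∀ q, L q = lam q ^ 2 := by
    intro q
    fin_cases q <;> rfl
  have hx : x ≤ 1 := (div_le_one hc).2 (by linarith)
  refine ⟨fun q => ?_, div_pos hd hc, by simp only [y]; linarith, by simp only [y]; ring, fun q => ?_⟩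
  · rw [hA, hL]
    exact ⟨shrinkSq_pos ha0 ha1 (hlam q).1 (hlam q).2, shrinkSq_le_sq ha0 ha1 (hlam q).1 (hlam q).2⟩
  · rw [hA, hL]
    exact shrinkSq_mul_add hd.ne' hc.ne'

theorem stmt_3 (l1 l2 l3 l4 a1 : ℝ)
    (h1 : 0 < l1) (h12 : l1 ≤ l2) (h23 : l2 ≤ l3) (h34 : l3 ≤ l4)
    (h4 : l4 < 1 / Real.sqrt 2)
    (hsum : l1^2 + l2^2 + l3^2 + l4^2 < 1 + 2*l1^2)
    (ha0 : 0 < a1) (ha1 : a1 ≤ l1) :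
    let A : Fin 4 → ℝ := ![a1^2,
      (1/2) * (1 - (1 - 2*l2^2)/(1 - 2*l1^2) * (1 - 2*a1^2)),
      (1/2) * (1 - (1 - 2*l3^2)/(1 - 2*l1^2) * (1 - 2*a1^2)),
      (1/2) * (1 - (1 - 2*l4^2)/(1 - 2*l1^2) * (1 - 2*a1^2))]
    let L : Fin 4 → ℝ := ![l1^2, l2^2, l3^2, l4^2]
    let x := (1 - 2*l1^2)/(1 - 2*a1^2)
    let y := (1 - x)/2
    (∀ q, 0 < A q ∧ A q ≤ L q) ∧ 0 < x ∧ 0 ≤ y ∧ x + 2*y = 1 ∧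
    ∀ q, A q * x + y = L q :=
  stmt_3_general l1 l2 l3 l4 a1 h12 h23 h34 h4 ha0 ha1
end

section
/- Let 0 < λ₁ ≤ ⋯ ≤ λ₅ satisfy Σ_{q=1}^5 λ_q² ≥ 4λ₅² and Σ_{q=1}^5 λ_q² < 2. Let α₁,…,α₅ be real numbers with 0 < α₁ ≤ ⋯ ≤ α₅, α_q ≤ λ_q for all q, and Σ_{q=1}^5 λ_q² - 4λ₅² ≥ Σ_{q=1}^5 α_q² - 4α₁². Define x := (2 - Σ λ_q²)/(2 - Σ α_q²) and yⁱ := (1/4)·[(Σ λ_q² - 4λᵢ²) - x·(Σ α_q² - 4αᵢ²)] for i = 1,…,5. Then 0 < x ≤ 1, yⁱ ≥ 0 for all i, x + 2(y¹+⋯+y⁵) = 1, and αᵢ²x + (y¹+⋯+y⁵) - yⁱ = λᵢ² for each i = 1,…,5. -/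
theorem stmt_5 (lam a : Fin 5 → ℝ)
    (hl0 : 0 < lam 0) (hlmono : ∀ i j : Fin 5, i ≤ j → lam i ≤ lam j)
    (hbig : 4 * (lam 4)^2 ≤ ∑ q, (lam q)^2)
    (hlt : ∑ q, (lam q)^2 < 2)
    (ha0 : 0 < a 0) (hamono : ∀ i j : Fin 5, i ≤ j → a i ≤ a j)
    (hale : ∀ q, a q ≤ lam q)
    (hcontrol : ∑ q, (a q)^2 - 4*(a 0)^2 ≤ ∑ q, (lam q)^2 - 4*(lam 4)^2) :
    let x := (2 - ∑ q, (lam q)^2) / (2 - ∑ q, (a q)^2)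
    let y := fun i : Fin 5 =>
      (1/4) * ((∑ q, (lam q)^2 - 4*(lam i)^2) - x * (∑ q, (a q)^2 - 4*(a i)^2))
    0 < x ∧ x ≤ 1 ∧ (∀ i, 0 ≤ y i) ∧
    x + 2 * ∑ i, y i = 1 ∧
    ∀ i, (a i)^2 * x + ((∑ q, y q) - y i) = (lam i)^2 := by
  intro x y
  have hxdef : x = (2 - ∑ q, (lam q)^2) / (2 - ∑ q, (a q)^2) := rfl
  have hydef : ∀ i, y i =
      (1/4) * ((∑ q, (lam q)^2 - 4*(lam i)^2) - x * (∑ q, (a q)^2 - 4*(a i)^2)) :=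
    fun i => rfl
  set S := ∑ q, (lam q)^2 with hSdef
  set A := ∑ q, (a q)^2 with hAdef
  have haq : ∀ q, 0 < a q := fun q => lt_of_lt_of_le ha0 (hamono 0 q (Fin.zero_le q))
  have hAS : A ≤ S := Finset.sum_le_sum (fun q _ => by nlinarith [haq q, hale q])
  have hA2 : A < 2 := lt_of_le_of_lt hAS hlt
  have hxpos : 0 < x := by rw [hxdef]; exact div_pos (by linarith) (by linarith)
  have hxle : x ≤ 1 := by
    rw [hxdef]; rw [div_le_one (by linarith)]; linarith
  have hx : x * (2 - A) = 2 - S := by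
    rw [hxdef]; exact div_mul_cancel₀ _ (by linarith)
  have hynn : ∀ i, 0 ≤ y i := by
    intro i
    have h1 : lam i ≤ lam 4 := hlmono i 4 (Fin.le_last i)
    have h2 : 0 < lam i := lt_of_lt_of_le hl0 (hlmono 0 i (Fin.zero_le i))
    have h3 : (lam i)^2 ≤ (lam 4)^2 := by nlinarith
    have h4 : a 0 ≤ a i := hamono 0 i (Fin.zero_le i)
    have h5 : (a 0)^2 ≤ (a i)^2 := by nlinarith [haq i, ha0]
    rw [hydef i]
    rcases le_or_gt (A - 4*(a i)^2) 0 with hc | hc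
    · nlinarith [mul_nonneg hxpos.le (neg_nonneg.mpr hc)]
    · nlinarith [mul_le_mul_of_nonneg_right hxle hc.le]
  have hsum : ∑ i, y i = (1/4) * (S - x * A) := by
    rw [Fin.sum_univ_five, hydef 0, hydef 1, hydef 2, hydef 3, hydef 4]
    have hS5 : S = (lam 0)^2 + (lam 1)^2 + (lam 2)^2 + (lam 3)^2 + (lam 4)^2 := by
      rw [hSdef, Fin.sum_univ_five]
    have hA5 : A = (a 0)^2 + (a 1)^2 + (a 2)^2 + (a 3)^2 + (a 4)^2 := by
      rw [hAdef, Fin.sum_univ_five]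
    rw [hS5, hA5]; ring
  refine ⟨hxpos, hxle, hynn, ?_, ?_⟩
  · rw [hsum]; linear_combination (1/2) * hx
  · intro i
    rw [hsum, hydef i]; ring
end

section
/- Let 0 < λ₁ ≤ ⋯ ≤ λ₅ with Σ_{q=1}^5 λ_q² ≥ 4λ₅² and Σ_{q=1}^5 λ_q² < 2, and let 0 < αᵢ ≤ λᵢ. If Σ_{q=1}^5 λ_q² - 4λ₅² ≥ Σ_{q=1}^5 α_q² - 4α₁² and α₁ ≤ ⋯ ≤ α₅, then for x := (2 - Σλ_q²)/(2 - Σα_q²) and every i = 1,…,5: Σ_{q=1}^5 λ_q² - 4λᵢ² ≥ x·(Σ_{q=1}^5 α_q² - 4αᵢ²). -/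
/-! The scaling factor `x` lies in `[0, 1]`, so multiplying by it can only move a defect
`∑ α_q² - 4 α_i²` towards `0`. Both the defect and `0` are bounded by `∑ λ_q² - 4 λ_i²`: the first
through the chain of defects `α_i → α₁ → λ₅ → λ_i` given by monotonicity and the control
hypothesis, the second because `∑ λ_q² ≥ 4 λ₅² ≥ 4 λ_i²`. -/

theorem mul_le_of_nonneg_of_le_one_of_le_of_nonneg {α : Type*} [Ring α] [LinearOrder α]
    [IsStrictOrderedRing α] {x b c : α} (hx0 : 0 ≤ x) (hx1 : x ≤ 1) (hbc : b ≤ c) (hc : 0 ≤ c) :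
    x * b ≤ c := by
  rcases le_total 0 b with hb | hb
  · exact (mul_le_of_le_one_left hb hx1).trans hbc
  · exact (mul_nonpos_of_nonneg_of_nonpos hx0 hb).trans hc

theorem stmt_6 (lam a : Fin 5 → ℝ)
    (hl0 : 0 < lam 0) (hlmono : ∀ i j : Fin 5, i ≤ j → lam i ≤ lam j)
    (hbig : 4 * (lam 4)^2 ≤ ∑ q, (lam q)^2)
    (hlt : ∑ q, (lam q)^2 < 2)
    (ha0 : ∀ q, 0 < a q) (hale : ∀ q, a q ≤ lam q)
    (hamono : ∀ i j : Fin 5, i ≤ j → a i ≤ a j)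
    (hcontrol : ∑ q, (a q)^2 - 4*(a 0)^2 ≤ ∑ q, (lam q)^2 - 4*(lam 4)^2) :
    ∀ i : Fin 5,
      ((2 - ∑ q, (lam q)^2) / (2 - ∑ q, (a q)^2)) * (∑ q, (a q)^2 - 4*(a i)^2)
        ≤ ∑ q, (lam q)^2 - 4*(lam i)^2 := by
  intro i
  have hsum : ∑ q, (a q)^2 ≤ ∑ q, (lam q)^2 :=
    Finset.sum_le_sum fun q _ => pow_le_pow_left₀ (ha0 q).le (hale q) 2
  have hpos : 0 < 2 - ∑ q, (a q)^2 := by linarith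
  have hlam : 4 * (lam i)^2 ≤ 4 * (lam 4)^2 := by
    gcongr
    exacts [hl0.le.trans (hlmono 0 i (Fin.zero_le i)), hlmono i 4 (Fin.le_last i)]
  have ha : 4 * (a 0)^2 ≤ 4 * (a i)^2 := by
    gcongr
    exacts [(ha0 0).le, hamono 0 i (Fin.zero_le i)]
  apply mul_le_of_nonneg_of_le_one_of_le_of_nonneg
  · exact div_nonneg (by linarith) hpos.le
  · exact (div_le_one hpos).2 (by linarith)
  · linarith
  · linarith
end
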